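/- arXiv:2004.08220 — 4 statements merged into one kernel-verified Lean document; each statement's English description precedes it below -/
import Mathlib

section
/- Let X_t = (X_t^1,…,X_t^n) and X_{t'} = (X_{t'}^1,…,X_{t'}^n) be jointly distributed finite random vectors. Assume the k-th order synergy Syn^(k) and unique information Un^(k) satisfy: (non-negativity) Un^(k)(V;Y|X) ≥ 0; (source data-processing inequality) Un^(k)(W;Y|X) ≤ Un^(k)(Z;Y|X) whenever W−Z−(X,Y) is a Markov chain; and (self-unique identity, the paper's Lemma 3) Un^(k)(X;Y|X) = Syn^(k)(X;Y), where on the left the whole source vector X is treated as a single supervenient feature. Then the system has a causally emergent feature of order k if and only if Syn^(k)(X_t;X_{t'}) > 0; that is, there exists a supervenient feature V_t with Un^(k)(V_t;X_{t'}|X_t) > 0 if and only if Syn^(k)(X_t;X_{t'}) > 0. -/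
/-!
Framework: finite probability.  A finite sample space `Ω` carries a probability
mass function `μ : Ω → ℝ`; random variables are functions on `Ω`.
-/

noncomputable section

open scoped BigOperators

attribute [local instance] Classical.propDecidable

variable {Ω : Type} [Fintype Ω]

/-- The probability that the random variable `f` takes the value `a`, under the pmf `μ`. -/
def prEq (μ : Ω → ℝ) {A : Type} (f : Ω → A) (a : A) : ℝ :=
  ∑ ω, if f ω = a then μ ω else 0

/-- `μ` is a probability mass function on the finite sample space `Ω`. -/
def IsPMF (μ : Ω → ℝ) : Prop :=
  (∀ ω, 0 ≤ μ ω) ∧ ∑ ω, μ ω = 1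

/-- The Markov chain `f − g − h`: `f` and `h` are conditionally independent given `g`. -/
def MarkovChain (μ : Ω → ℝ) {A B C : Type} (f : Ω → A) (g : Ω → B) (h : Ω → C) : Prop :=
  ∀ a b c,
    prEq μ (fun ω => (f ω, g ω, h ω)) (a, b, c) * prEq μ g b =
      prEq μ (fun ω => (f ω, g ω)) (a, b) * prEq μ (fun ω => (g ω, h ω)) (b, c)

/-- Statistical independence of two random variables. -/
def IndepRV (μ : Ω → ℝ) {A B : Type} (f : Ω → A) (g : Ω → B) : Prop :=
  ∀ a b, prEq μ (fun ω => (f ω, g ω)) (a, b) = prEq μ f a * prEq μ g b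

/-- Shannon mutual information `I(f;g)`. -/
def mutInfo (μ : Ω → ℝ) {A B : Type} (f : Ω → A) (g : Ω → B) : ℝ :=
  ∑ a ∈ Finset.univ.image f, ∑ b ∈ Finset.univ.image g,
    prEq μ (fun ω => (f ω, g ω)) (a, b) *
      Real.log (prEq μ (fun ω => (f ω, g ω)) (a, b) / (prEq μ f a * prEq μ g b))

/-- Conditional mutual information `I(f;g|h)`. -/
def condMutInfo (μ : Ω → ℝ) {A B C : Type} (f : Ω → A) (g : Ω → B) (h : Ω → C) : ℝ :=
  ∑ a ∈ Finset.univ.image f, ∑ b ∈ Finset.univ.image g, ∑ c ∈ Finset.univ.image h,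
    prEq μ (fun ω => (f ω, g ω, h ω)) (a, b, c) *
      Real.log ((prEq μ h c * prEq μ (fun ω => (f ω, g ω, h ω)) (a, b, c)) /
        (prEq μ (fun ω => (f ω, h ω)) (a, c) * prEq μ (fun ω => (g ω, h ω)) (b, c)))

/-- Conditional entropy `H(f|g)`. -/
def condEntropyRV (μ : Ω → ℝ) {A B : Type} (f : Ω → A) (g : Ω → B) : ℝ :=
  -∑ a ∈ Finset.univ.image f, ∑ b ∈ Finset.univ.image g,
    prEq μ (fun ω => (f ω, g ω)) (a, b) *
      Real.log (prEq μ (fun ω => (f ω, g ω)) (a, b) / prEq μ g b)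

/-- The sub-vector `X^α` of the random vector `X`, for a set of indices `α ⊆ [n]`. -/
def subvec {n : ℕ} {𝓧 : Fin n → Type} (X : Ω → ∀ i, 𝓧 i) (α : Finset (Fin n)) :
    Ω → ∀ i : α, 𝓧 i :=
  fun ω i => X ω i

/-- The collection of all subsets of `[n]` of cardinality `k`. -/
def kSets (n k : ℕ) : Finset (Finset (Fin n)) :=
  Finset.univ.filter fun α => α.card = k

/-!
`Un V f` models `Un⁽ᵏ⁾(f ; X_{t'} | X_t)` and `Syn` models `Syn⁽ᵏ⁾(X_t ; X_{t'})`; the order `k`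
enters only through them.

The source vector `X_t` is itself supervenient, and every supervenient feature `f` satisfies
`f − X_t − (X_t, X_{t'})`, so by the data-processing inequality `Un(f) ≤ Un(X_t) = Syn`.
-/

theorem prEq_congr (μ : Ω → ℝ) {A B : Type} {f : Ω → A} {g : Ω → B} {a : A} {b : B}
    (h : ∀ ω, f ω = a ↔ g ω = b) : prEq μ f a = prEq μ g b :=
  Finset.sum_congr rfl fun ω _ => if_congr (h ω) rfl rfl

theorem prEq_eq_zero (μ : Ω → ℝ) {A : Type} {f : Ω → A} {a : A} (h : ∀ ω, f ω ≠ a) :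
    prEq μ f a = 0 :=
  Finset.sum_eq_zero fun ω _ => if_neg (h ω)

theorem markovChain_self (μ : Ω → ℝ) {B C : Type} (g : Ω → B) (h : Ω → C) :
    MarkovChain μ g g h := by
  intro a b c
  by_cases hab : a = b
  · subst hab
    rw [prEq_congr μ (f := fun ω => (g ω, g ω, h ω)) (g := fun ω => (g ω, h ω))
        (a := (a, a, c)) (b := (a, c)) (by grind),
      prEq_congr μ (f := fun ω => (g ω, g ω)) (g := g) (a := (a, a)) (b := a) (by grind)]
    ring
  · rw [prEq_eq_zero μ (a := (a, b, c)) (by grind), prEq_eq_zero μ (a := (a, b)) (by grind)]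
    ring

/-- Conditioning on `g` already fixes `g`, so it may be adjoined to the far end of a chain. -/
theorem MarkovChain.prod_middle_right (μ : Ω → ℝ) {A B C : Type} {f : Ω → A} {g : Ω → B}
    {h : Ω → C} (hfgh : MarkovChain μ f g h) : MarkovChain μ f g (fun ω => (g ω, h ω)) := by
  rintro a b ⟨b', c⟩
  by_cases hb : b' = b
  · subst hb
    rw [prEq_congr μ (f := fun ω => (f ω, g ω, (g ω, h ω))) (g := fun ω => (f ω, g ω, h ω))
        (a := (a, b', (b', c))) (b := (a, b', c)) (by grind),
      prEq_congr μ (f := fun ω => (g ω, (g ω, h ω))) (g := fun ω => (g ω, h ω))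
        (a := (b', (b', c))) (b := (b', c)) (by grind)]
    exact hfgh a b' c
  · rw [prEq_eq_zero μ (a := (a, b, (b', c))) (by grind),
      prEq_eq_zero μ (a := (b, (b', c))) (by grind)]
    ring

theorem causal_emergence_iff_synergy_pos_general
    {Ω : Type} [Fintype Ω] (μ : Ω → ℝ)
    {n : ℕ} {𝓧 𝓨 : Fin n → Type} [∀ i, Fintype (𝓧 i)]
    (X : Ω → ∀ i, 𝓧 i) (X' : Ω → ∀ i, 𝓨 i)
    (Un : (V : Type) → (Ω → V) → ℝ)
    (Syn : ℝ)
    (hUn_dpi : ∀ (W Z : Type) (f : Ω → W) (g : Ω → Z),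
      MarkovChain μ f g (fun ω => (X ω, X' ω)) → Un W f ≤ Un Z g)
    (hself : Un (∀ i, 𝓧 i) X = Syn) :
    (∃ (V : Type) (_ : Fintype V) (f : Ω → V),
        MarkovChain μ f X X' ∧ 0 < Un V f) ↔ 0 < Syn := by
  constructor
  · rintro ⟨V, _, f, hsup, hpos⟩
    calc 0 < Un V f := hpos
      _ ≤ Un (∀ i, 𝓧 i) X := hUn_dpi V _ f X hsup.prod_middle_right
      _ = Syn := hself
  · intro hSyn
    exact ⟨∀ i, 𝓧 i, inferInstance, X, markovChain_self μ X X', hself ▸ hSyn⟩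

theorem causal_emergence_iff_synergy_pos
    {Ω : Type} [Fintype Ω] (μ : Ω → ℝ) (hμ : IsPMF μ)
    {n : ℕ} {𝓧 𝓨 : Fin n → Type} [∀ i, Fintype (𝓧 i)] [∀ i, Fintype (𝓨 i)]
    (X : Ω → ∀ i, 𝓧 i) (X' : Ω → ∀ i, 𝓨 i)
    (k : ℕ)
    (Un : (V : Type) → (Ω → V) → ℝ)
    (Syn : ℝ)
    (hUn_nonneg : ∀ (V : Type) (f : Ω → V), 0 ≤ Un V f)
    (hUn_dpi : ∀ (W Z : Type) (f : Ω → W) (g : Ω → Z),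
      MarkovChain μ f g (fun ω => (X ω, X' ω)) → Un W f ≤ Un Z g)
    (hself : Un (∀ i, 𝓧 i) X = Syn) :
    (∃ (V : Type) (_ : Fintype V) (f : Ω → V),
        MarkovChain μ f X X' ∧ 0 < Un V f) ↔ 0 < Syn :=
  causal_emergence_iff_synergy_pos_general μ X X' Un Syn hUn_dpi hself
end
end

section
/- Let X_t and X_{t'} be jointly distributed finite random vectors with n components each, let V_t be supervenient on X_t and V_{t'} supervenient on X_{t'}, with V_t−X_t−X_{t'}−V_{t'} a Markov chain. Define Ψ^(k) := I(V_t;V_{t'}) − Σ_{α⊆[n],|α|=k} I(X_t^α;V_{t'}). Assume: (whole-minus-sum) Syn^(k)(X;Y) ≥ I(X;Y) − Σ_{|α|=k} I(X^α;Y); and (target data-processing inequality) Syn^(k)(X;U) ≤ Syn^(k)(X;Y) whenever X−Y−U is a Markov chain. Then Ψ^(k) ≤ Syn^(k)(X_t;X_{t'}); consequently Ψ^(k) > 0 is a sufficient condition for causal emergence of order k (i.e. it implies Syn^(k)(X_t;X_{t'}) > 0). -/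
/-!
Framework: finite probability.  A finite sample space `Ω` carries a probability
mass function `μ : Ω → ℝ`; random variables are functions on `Ω`.
-/

noncomputable section

open scoped BigOperators

attribute [local instance] Classical.propDecidable

variable {Ω : Type} [Fintype Ω]

/-!
The whole-minus-sum property at the target `V'` gives `I(X;V') - Σ_α I(X^α;V') ≤ Syn(X;V')`,
and the target data-processing inequality along `X − X' − V'` gives
`Syn(X;V') ≤ Syn(X;X')`. It remains to see `I(V;V') ≤ I(X;V')`, which is data processing along
`V − X − V'`: `I(V;V') ≤ I((V,X);V')` by the log-sum inequality, and `I((V,X);V') = I(X;V')`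
because, pointwise on the sample space, the Markov property turns the one log-ratio into the
other. Both three-term chains are marginals of `V − X − X' − V'`.
-/

/-- The log-sum inequality, from Jensen's inequality for `x ↦ x log x` with weights `b i`. -/
theorem sum_mul_log_sum_div_sum_le {ι : Type} (s : Finset ι) {a b : ι → ℝ}
    (ha : ∀ i ∈ s, 0 ≤ a i) (hb : ∀ i ∈ s, 0 ≤ b i) (hab : ∀ i ∈ s, b i = 0 → a i = 0) :
    (∑ i ∈ s, a i) * Real.log ((∑ i ∈ s, a i) / ∑ i ∈ s, b i) ≤
      ∑ i ∈ s, a i * Real.log (a i / b i) := by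
  rcases (Finset.sum_nonneg hb).eq_or_lt with hB | hB
  · have hb0 := (Finset.sum_eq_zero_iff_of_nonneg hb).1 hB.symm
    rw [Finset.sum_eq_zero fun i hi => hab i hi (hb0 i hi), zero_mul]
    exact Finset.sum_nonneg fun i hi => by rw [hab i hi (hb0 i hi), zero_mul]
  have hcancel : ∀ i ∈ s, ∀ x : ℝ, b i * (a i / b i * x) = a i * x := fun i hi x => by
    rcases eq_or_ne (b i) 0 with h | h
    · simp [h, hab i hi h]
    · field_simp
  have key := Real.convexOn_mul_log.map_centerMass_le hb hB
    fun i hi => Set.mem_Ici.2 (div_nonneg (ha i hi) (hb i hi))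
  have hA : ∑ i ∈ s, b i * (a i / b i) = ∑ i ∈ s, a i :=
    Finset.sum_congr rfl fun i hi => by simpa using hcancel i hi 1
  have hL : ∑ i ∈ s, b i * (a i / b i * Real.log (a i / b i)) =
      ∑ i ∈ s, a i * Real.log (a i / b i) := Finset.sum_congr rfl fun i hi => hcancel i hi _
  simp only [Finset.centerMass, smul_eq_mul, Function.comp_apply, hA, hL] at key
  rw [← div_eq_inv_mul, ← div_eq_inv_mul, div_mul_eq_mul_div] at key
  exact (div_le_div_iff_of_pos_right hB).1 key

section FiniteProbability

variable {μ : Ω → ℝ}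

lemma prEq_nonneg (hμ : ∀ ω, 0 ≤ μ ω) {A : Type} (f : Ω → A) (a : A) : 0 ≤ prEq μ f a :=
  Finset.sum_nonneg fun ω _ => by split_ifs <;> simp [hμ ω]

lemma prEq_le_prEq_of_imp (hμ : ∀ ω, 0 ≤ μ ω) {A B : Type} {f : Ω → A} {g : Ω → B} {a : A}
    {b : B} (h : ∀ ω, f ω = a → g ω = b) : prEq μ f a ≤ prEq μ g b :=
  Finset.sum_le_sum fun ω _ => by
    by_cases hf : f ω = a
    · simp [hf, h ω hf]
    · rw [if_neg hf]
      split_ifs <;> simp [hμ ω]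

lemma prEq_eq_zero_of_imp (hμ : ∀ ω, 0 ≤ μ ω) {A B : Type} {f : Ω → A} {g : Ω → B} {a : A}
    {b : B} (h : ∀ ω, f ω = a → g ω = b) (hg : prEq μ g b = 0) : prEq μ f a = 0 :=
  le_antisymm (hg ▸ prEq_le_prEq_of_imp hμ h) (prEq_nonneg hμ f a)

lemma prEq_eq_of_iff {A B : Type} {f : Ω → A} {g : Ω → B} {a : A} {b : B}
    (h : ∀ ω, f ω = a ↔ g ω = b) : prEq μ f a = prEq μ g b :=
  Finset.sum_congr rfl fun ω _ => by simp only [h ω]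

lemma le_prEq_self (hμ : ∀ ω, 0 ≤ μ ω) {A : Type} (f : Ω → A) (ω : Ω) :
    μ ω ≤ prEq μ f (f ω) := by
  have := Finset.single_le_sum (f := fun ω' => if f ω' = f ω then μ ω' else 0)
    (fun ω' _ => by split_ifs <;> simp [hμ ω']) (Finset.mem_univ ω)
  simpa [prEq] using this

/-- Summing `h` out of a joint law; `hE` says that the event `F = E c` is `G = t ∧ h = c`. -/
lemma sum_prEq_eq_prEq {A B C : Type} (h : Ω → C) {F : Ω → A} {G : Ω → B} {E : C → A} {t : B}
    (hE : ∀ ω c, F ω = E c ↔ G ω = t ∧ h ω = c) :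
    ∑ c ∈ Finset.univ.image h, prEq μ F (E c) = prEq μ G t := by
  unfold prEq
  rw [Finset.sum_comm]
  refine Finset.sum_congr rfl fun ω _ => ?_
  simp_rw [hE, ite_and]
  split_ifs <;> simp

lemma sum_prEq_mul {A : Type} (F : Ω → A) {S : Finset A} (hS : ∀ ω, F ω ∈ S) (G : A → ℝ) :
    ∑ t ∈ S, prEq μ F t * G t = ∑ ω, μ ω * G (F ω) := by
  unfold prEq
  simp_rw [Finset.sum_mul, ite_mul, zero_mul]
  rw [Finset.sum_comm]
  refine Finset.sum_congr rfl fun ω _ => ?_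
  rw [Finset.sum_ite_eq, if_pos (hS ω)]

lemma mutInfo_eq_sum {A B : Type} (f : Ω → A) (g : Ω → B) :
    mutInfo μ f g = ∑ ω, μ ω * Real.log (prEq μ (fun ω => (f ω, g ω)) (f ω, g ω) /
      (prEq μ f (f ω) * prEq μ g (g ω))) := by
  rw [mutInfo, ← Finset.sum_product']
  exact sum_prEq_mul (fun ω => (f ω, g ω)) (fun ω => by simp)
    fun p => Real.log (prEq μ (fun ω => (f ω, g ω)) p / (prEq μ f p.1 * prEq μ g p.2))

end FiniteProbability

section Markov

variable {μ : Ω → ℝ} {A B C D : Type}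

theorem MarkovChain.of_pair_right {f : Ω → A} {g : Ω → B} {h : Ω → C} {k : Ω → D}
    (hc : MarkovChain μ f g (fun ω => (h ω, k ω))) : MarkovChain μ f g k := by
  intro a b d
  have H := Finset.sum_congr (s₁ := Finset.univ.image h) rfl fun c _ => hc a b (c, d)
  rwa [← Finset.sum_mul, ← Finset.mul_sum,
    sum_prEq_eq_prEq h (G := fun ω => (f ω, g ω, k ω)) (t := (a, b, d))
      (fun ω c => by simp only [Prod.mk.injEq]; tauto),
    sum_prEq_eq_prEq h (G := fun ω => (g ω, k ω)) (t := (b, d))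
      (fun ω c => by simp only [Prod.mk.injEq]; tauto)] at H

theorem MarkovChain.of_pair_left {f : Ω → A} {g : Ω → B} {h : Ω → C} {k : Ω → D}
    (hc : MarkovChain μ (fun ω => (f ω, g ω)) h k) : MarkovChain μ g h k := by
  intro b c d
  have H := Finset.sum_congr (s₁ := Finset.univ.image f) rfl fun a _ => hc (a, b) c d
  rwa [← Finset.sum_mul, ← Finset.sum_mul,
    sum_prEq_eq_prEq f (G := fun ω => (g ω, h ω, k ω)) (t := (b, c, d))
      (fun ω a => by simp only [Prod.mk.injEq]; tauto),
    sum_prEq_eq_prEq f (G := fun ω => (g ω, h ω)) (t := (b, c))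
      (fun ω a => by simp only [Prod.mk.injEq]; tauto)] at H

end Markov

section MutualInformation

variable {μ : Ω → ℝ} {A B C : Type}

lemma prEq_mul_log_le_sum_prEq_mul_log (hμ : ∀ ω, 0 ≤ μ ω) (f : Ω → A) (g : Ω → B) (h : Ω → C)
    (a : A) (c : C) :
    prEq μ (fun ω => (f ω, h ω)) (a, c) *
        Real.log (prEq μ (fun ω => (f ω, h ω)) (a, c) / (prEq μ f a * prEq μ h c)) ≤
      ∑ b ∈ Finset.univ.image g, prEq μ (fun ω => ((f ω, h ω), g ω)) ((a, c), b) *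
        Real.log (prEq μ (fun ω => ((f ω, h ω), g ω)) ((a, c), b) /
          (prEq μ (fun ω => (f ω, g ω)) (a, b) * prEq μ h c)) := by
  have hnum : ∑ b ∈ Finset.univ.image g, prEq μ (fun ω => ((f ω, h ω), g ω)) ((a, c), b) =
      prEq μ (fun ω => (f ω, h ω)) (a, c) :=
    sum_prEq_eq_prEq g fun ω b => by simp only [Prod.mk.injEq]
  have hden : ∑ b ∈ Finset.univ.image g, prEq μ (fun ω => (f ω, g ω)) (a, b) * prEq μ h c =
      prEq μ f a * prEq μ h c := by
    rw [← Finset.sum_mul, sum_prEq_eq_prEq g (G := f) (t := a) fun ω b => by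
      simp only [Prod.mk.injEq]]
  rw [← hnum, ← hden]
  exact sum_mul_log_sum_div_sum_le _ (fun b _ => prEq_nonneg hμ _ _)
    (fun b _ => mul_nonneg (prEq_nonneg hμ _ _) (prEq_nonneg hμ _ _))
    fun b _ hb => (mul_eq_zero.1 hb).elim
      (prEq_eq_zero_of_imp hμ (g := fun ω => (f ω, g ω)) fun ω hω => by simp_all)
      (prEq_eq_zero_of_imp hμ (g := h) fun ω hω => by simp_all)

theorem mutInfo_le_mutInfo_pair (hμ : ∀ ω, 0 ≤ μ ω) (f : Ω → A) (g : Ω → B) (h : Ω → C) :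
    mutInfo μ f h ≤ mutInfo μ (fun ω => (f ω, g ω)) h := by
  set P := prEq μ (fun ω => ((f ω, h ω), g ω))
  have hP : ∀ a b c, P ((a, c), b) = prEq μ (fun ω => ((f ω, g ω), h ω)) ((a, b), c) :=
    fun a b c => prEq_eq_of_iff fun ω => by simp only [Prod.mk.injEq]; tauto
  calc mutInfo μ f h
      ≤ ∑ p ∈ Finset.univ.image f ×ˢ Finset.univ.image h, ∑ b ∈ Finset.univ.image g,
          P (p, b) * Real.log (P (p, b) /
            (prEq μ (fun ω => (f ω, g ω)) (p.1, b) * prEq μ h p.2)) := by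
        rw [mutInfo, Finset.sum_product]
        exact Finset.sum_le_sum fun a _ => Finset.sum_le_sum fun c _ =>
          prEq_mul_log_le_sum_prEq_mul_log hμ f g h a c
    _ = ∑ ω, μ ω * Real.log (P ((f ω, h ω), g ω) /
          (prEq μ (fun ω => (f ω, g ω)) (f ω, g ω) * prEq μ h (h ω))) := by
        rw [← Finset.sum_product']
        exact sum_prEq_mul (fun ω => ((f ω, h ω), g ω)) (fun ω => by simp)
          fun t => Real.log (P t / (prEq μ (fun ω => (f ω, g ω)) (t.1.1, t.2) * prEq μ h t.1.2))
    _ = mutInfo μ (fun ω => (f ω, g ω)) h := by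
        simp only [hP, mutInfo_eq_sum]

theorem mutInfo_pair_eq_of_markovChain (hμ : ∀ ω, 0 ≤ μ ω) {f : Ω → A} {g : Ω → B}
    {h : Ω → C} (hc : MarkovChain μ f g h) :
    mutInfo μ (fun ω => (f ω, g ω)) h = mutInfo μ g h := by
  rw [mutInfo_eq_sum, mutInfo_eq_sum]
  refine Finset.sum_congr rfl fun ω _ => ?_
  rcases (hμ ω).eq_or_lt with h0 | hpos
  · simp [← h0]
  have pos : ∀ {D : Type} (F : Ω → D), 0 < prEq μ F (F ω) :=
    fun F => hpos.trans_le (le_prEq_self hμ F ω)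
  have hmarkov := hc (f ω) (g ω) (h ω)
  rw [prEq_eq_of_iff (g := fun ω => ((f ω, g ω), h ω)) (b := ((f ω, g ω), h ω))
    fun ω' => by simp only [Prod.mk.injEq, and_assoc]] at hmarkov
  congr 2
  rw [div_eq_div_iff (mul_pos (pos _) (pos _)).ne' (mul_pos (pos _) (pos _)).ne']
  linear_combination prEq μ h (h ω) * hmarkov

theorem mutInfo_le_of_markovChain (hμ : ∀ ω, 0 ≤ μ ω) {f : Ω → A} {g : Ω → B} {h : Ω → C}
    (hc : MarkovChain μ f g h) : mutInfo μ f h ≤ mutInfo μ g h :=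
  (mutInfo_le_mutInfo_pair hμ f g h).trans (mutInfo_pair_eq_of_markovChain hμ hc).le

end MutualInformation

theorem psi_positive_sufficient_for_emergence_general
    {Ω : Type} [Fintype Ω] (μ : Ω → ℝ) (hμ : IsPMF μ)
    {n : ℕ} {𝓧 𝓨 : Fin n → Type}
    (X : Ω → ∀ i, 𝓧 i) (X' : Ω → ∀ i, 𝓨 i)
    {𝓥 𝓤 : Type} (V : Ω → 𝓥) (V' : Ω → 𝓤)
    (k : ℕ)
    (hchain₁ : MarkovChain μ V X (fun ω => (X' ω, V' ω)))
    (hchain₂ : MarkovChain μ (fun ω => (V ω, X ω)) X' V')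
    (Syn : (T : Type) → (Ω → T) → ℝ)
    (hwms : ∀ (T : Type) (Y : Ω → T),
      mutInfo μ X Y - ∑ α ∈ kSets n k, mutInfo μ (subvec X α) Y ≤ Syn T Y)
    (htdpi : ∀ (T U : Type) (Y : Ω → T) (Z : Ω → U),
      MarkovChain μ X Y Z → Syn U Z ≤ Syn T Y) :
    mutInfo μ V V' - ∑ α ∈ kSets n k, mutInfo μ (subvec X α) V'
        ≤ Syn (∀ i, 𝓨 i) X' ∧
      (0 < mutInfo μ V V' - ∑ α ∈ kSets n k, mutInfo μ (subvec X α) V' →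
        0 < Syn (∀ i, 𝓨 i) X') := by
  have hVX : mutInfo μ V V' ≤ mutInfo μ X V' :=
    mutInfo_le_of_markovChain hμ.1 hchain₁.of_pair_right
  have hSyn : Syn 𝓤 V' ≤ Syn (∀ i, 𝓨 i) X' := htdpi _ _ X' V' hchain₂.of_pair_left
  have hwms' := hwms 𝓤 V'
  exact ⟨by linarith, fun _ => by linarith⟩

theorem psi_positive_sufficient_for_emergence
    {Ω : Type} [Fintype Ω] (μ : Ω → ℝ) (hμ : IsPMF μ)
    {n : ℕ} {𝓧 𝓨 : Fin n → Type} [∀ i, Fintype (𝓧 i)] [∀ i, Fintype (𝓨 i)]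
    (X : Ω → ∀ i, 𝓧 i) (X' : Ω → ∀ i, 𝓨 i)
    {𝓥 𝓤 : Type} [Fintype 𝓥] [Fintype 𝓤] (V : Ω → 𝓥) (V' : Ω → 𝓤)
    (k : ℕ)
    (hchain₁ : MarkovChain μ V X (fun ω => (X' ω, V' ω)))
    (hchain₂ : MarkovChain μ (fun ω => (V ω, X ω)) X' V')
    (Syn : (T : Type) → (Ω → T) → ℝ)
    (hwms : ∀ (T : Type) (Y : Ω → T),
      mutInfo μ X Y - ∑ α ∈ kSets n k, mutInfo μ (subvec X α) Y ≤ Syn T Y)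
    (htdpi : ∀ (T U : Type) (Y : Ω → T) (Z : Ω → U),
      MarkovChain μ X Y Z → Syn U Z ≤ Syn T Y) :
    mutInfo μ V V' - ∑ α ∈ kSets n k, mutInfo μ (subvec X α) V'
        ≤ Syn (∀ i, 𝓨 i) X' ∧
      (0 < mutInfo μ V V' - ∑ α ∈ kSets n k, mutInfo μ (subvec X α) V' →
        0 < Syn (∀ i, 𝓨 i) X') :=
  psi_positive_sufficient_for_emergence_general μ hμ X X' V V' k hchain₁ hchain₂ Syn hwms htdpi
end
end

section
/- For every n ≥ 1: every 𝜸 ∈ 𝒜_{n+1} with 𝜸 ⪯ {{n+1}} is either {{n+1}} itself or equals f(𝜶) for a unique 𝜶 ∈ 𝒜_n. Consequently, the node {[n], {n+1}} = f({[n]}) is the unique direct predecessor of {{n+1}} in 𝒜_{n+1}: there exists no 𝜷 ∈ 𝒜_{n+1} with 𝜷 ≺ {{n+1}} and not 𝜷 ⪯ {[n],{n+1}}. -/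
noncomputable section

open scoped BigOperators

attribute [local instance] Classical.propDecidable

/-- The antichains of nonempty subsets of `[n] = {1,…,n}` (modelled as `Fin n`):
nonempty collections of nonempty subsets of `[n]`, no element of which is contained
in another distinct element. -/
def Antichains (n : ℕ) : Set (Finset (Finset (Fin n))) :=
  {A | A.Nonempty ∧ (∀ a ∈ A, a.Nonempty) ∧ ∀ a ∈ A, ∀ b ∈ A, a ≠ b → ¬a ⊆ b}

/-- The partial order on antichains: `A ⪯ B` iff every `b ∈ B` contains some `a ∈ A`. -/
def achLE {n : ℕ} (A B : Finset (Finset (Fin n))) : Prop :=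
  ∀ b ∈ B, ∃ a ∈ A, a ⊆ b

/-- Strict order on antichains: `A ≺ B` iff `A ⪯ B` and not `B ⪯ A`. -/
def achLT {n : ℕ} (A B : Finset (Finset (Fin n))) : Prop :=
  achLE A B ∧ ¬achLE B A

/-- `S_n⁽ᵏ⁾`: the antichains all of whose elements have cardinality `> k`. -/
def Sset (n k : ℕ) : Set (Finset (Finset (Fin n))) :=
  {A | A ∈ Antichains n ∧ ∀ a ∈ A, k < a.card}

/-- `R_n⁽ᵏ⁾`: the antichains with at least two distinct elements of cardinality `≤ k`. -/
def Rset (n k : ℕ) : Set (Finset (Finset (Fin n))) :=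
  {A | A ∈ Antichains n ∧ ∃ a ∈ A, ∃ b ∈ A, a ≠ b ∧ a.card ≤ k ∧ b.card ≤ k}

/-- `U_n⁽ᵏ⁾(β)`: the antichains containing `β` in which every element other than `β`
has cardinality `> k`. -/
def Uset (n k : ℕ) (β : Finset (Fin n)) : Set (Finset (Finset (Fin n))) :=
  {A | A ∈ Antichains n ∧ β ∈ A ∧ ∀ a ∈ A, a ≠ β → k < a.card}

/-- A subset of `[n]` viewed as a subset of `[n+1]`. -/
def liftSet {n : ℕ} (a : Finset (Fin n)) : Finset (Fin (n + 1)) :=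
  a.map ⟨Fin.castSucc, Fin.castSucc_injective n⟩

/-- The map `f : 𝒜_n → 𝒜_{n+1}`, `f(𝜶) = 𝜶 ∪ {{n+1}}` (the extra element `n+1` of
`[n+1]` is modelled by `Fin.last n`). -/
def fmap {n : ℕ} (A : Finset (Finset (Fin n))) : Finset (Finset (Fin (n + 1))) :=
  A.image liftSet ∪ {({Fin.last n} : Finset (Fin (n + 1)))}

/-!
An antichain `𝜸 ⪯ {{n+1}}` must contain `{n+1}`, its only nonempty subset of `{n+1}`, so no
other member of `𝜸` contains `n+1`. The remaining members are therefore lifts of subsets of `[n]`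
forming an antichain `𝜶`, and `𝜸 = f(𝜶)`; `f` is injective because `{n+1}` is never a lift.
If moreover `{{n+1}} ⋠ 𝜷`, some member of `𝜷` avoids `n+1`, i.e. lies in `[n]`, and together with
`{n+1} ∈ 𝜷` this gives `𝜷 ⪯ {[n], {n+1}}`.
-/

section Antichains

variable {m : ℕ}

lemma mem_antichains_of_subset {B C : Finset (Finset (Fin m))} (hC : C ∈ Antichains m)
    (hBC : B ⊆ C) (hB : B.Nonempty) : B ∈ Antichains m :=
  ⟨hB, fun a ha => hC.2.1 a (hBC ha),
    fun a ha b hb => hC.2.2 a (hBC ha) b (hBC hb)⟩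

lemma achLE_union_right_iff {A B B' : Finset (Finset (Fin m))} :
    achLE A (B ∪ B') ↔ achLE A B ∧ achLE A B' := by
  simp only [achLE, Finset.mem_union, or_imp, forall_and]

lemma achLE_singleton_right_iff {A : Finset (Finset (Fin m))} {b : Finset (Fin m)} :
    achLE A {b} ↔ ∃ a ∈ A, a ⊆ b := by
  simp only [achLE, Finset.mem_singleton, forall_eq]

lemma achLE_singleton_left_iff {a : Finset (Fin m)} {B : Finset (Finset (Fin m))} :
    achLE {a} B ↔ ∀ b ∈ B, a ⊆ b := by
  simp only [achLE, Finset.mem_singleton, exists_eq_left]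

lemma singleton_mem_of_achLE_singleton {C : Finset (Finset (Fin m))} {x : Fin m}
    (hC : C ∈ Antichains m) (h : achLE C {{x}}) : {x} ∈ C := by
  obtain ⟨c, hc, hcx⟩ := achLE_singleton_right_iff.mp h
  rwa [(Finset.Nonempty.subset_singleton_iff (hC.2.1 c hc)).mp hcx] at hc

lemma notMem_of_singleton_mem_antichains {C : Finset (Finset (Fin m))} {x : Fin m}
    {b : Finset (Fin m)} (hC : C ∈ Antichains m) (hx : {x} ∈ C) (hb : b ∈ C)
    (hbx : b ≠ {x}) : x ∉ b := fun hxb =>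
  hC.2.2 _ hx b hb (Ne.symm hbx) (Finset.singleton_subset_iff.mpr hxb)

end Antichains

section Lift

variable {n : ℕ}

lemma liftSet_subset_liftSet_iff {a b : Finset (Fin n)} : liftSet a ⊆ liftSet b ↔ a ⊆ b :=
  Finset.map_subset_map

lemma liftSet_injective : Function.Injective (liftSet (n := n)) :=
  Finset.map_injective _

lemma liftSet_univ : liftSet (Finset.univ : Finset (Fin n)) = Finset.Iio (Fin.last n) :=
  (Fin.Iio_last_eq_map).symm

lemma subset_liftSet_univ_iff {b : Finset (Fin (n + 1))} :
    b ⊆ liftSet Finset.univ ↔ Fin.last n ∉ b := by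
  simp only [liftSet_univ, Finset.subset_iff, Finset.mem_Iio, Fin.lt_last_iff_ne_last]
  exact ⟨fun h hb => h hb rfl, fun h x hx hxl => h (hxl ▸ hx)⟩

lemma exists_liftSet_eq {b : Finset (Fin (n + 1))} (hb : Fin.last n ∉ b) :
    ∃ a, liftSet a = b := by
  obtain ⟨a, -, rfl⟩ := Finset.subset_map_iff.mp (subset_liftSet_univ_iff.mpr hb)
  exact ⟨a, rfl⟩

lemma exists_image_liftSet_eq {B : Finset (Finset (Fin (n + 1)))}
    (hB : ∀ b ∈ B, Fin.last n ∉ b) :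
    ∃ A : Finset (Finset (Fin n)), A.image liftSet = B := by
  refine Finset.subset_univ_image_iff.mp fun b hb => ?_
  obtain ⟨a, rfl⟩ := exists_liftSet_eq (hB b hb)
  exact Finset.mem_image_of_mem _ (Finset.mem_univ a)

lemma mem_antichains_of_image_liftSet {A : Finset (Finset (Fin n))}
    (hA : A.image liftSet ∈ Antichains (n + 1)) : A ∈ Antichains n := by
  obtain ⟨hne, hnonempty, hanti⟩ := hA
  refine ⟨Finset.image_nonempty.mp hne, fun a ha => ?_, fun a ha b hb hab hsub => ?_⟩
  · exact Finset.map_nonempty.mp (hnonempty _ (Finset.mem_image_of_mem _ ha))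
  · exact hanti _ (Finset.mem_image_of_mem _ ha) _ (Finset.mem_image_of_mem _ hb)
      (liftSet_injective.ne hab) (liftSet_subset_liftSet_iff.mpr hsub)

end Lift

section Fmap

variable {n : ℕ}

lemma singleton_last_notMem_image_liftSet (A : Finset (Finset (Fin n))) :
    ({Fin.last n} : Finset (Fin (n + 1))) ∉ A.image liftSet := by
  rintro hmem
  obtain ⟨a, -, ha⟩ := Finset.mem_image.mp hmem
  exact (subset_liftSet_univ_iff.mp (ha ▸ liftSet_subset_liftSet_iff.mpr (Finset.subset_univ a)))
    (Finset.mem_singleton_self _)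

lemma fmap_injective : Function.Injective (fmap (n := n)) := by
  intro A B h
  have himage : A.image liftSet = B.image liftSet := by
    have := congrArg (·.erase ({Fin.last n} : Finset (Fin (n + 1)))) h
    simpa only [fmap, Finset.erase_union_distrib, Finset.erase_singleton, Finset.union_empty,
      Finset.erase_eq_of_notMem (singleton_last_notMem_image_liftSet _)] using this
  exact Finset.image_injective liftSet_injective himage

lemma exists_fmap_eq {C : Finset (Finset (Fin (n + 1)))} (hC : C ∈ Antichains (n + 1))
    (hlast : {Fin.last n} ∈ C) (hC1 : C ≠ {{Fin.last n}}) :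
    ∃ A ∈ Antichains n, C = fmap A := by
  have hrest : C.erase {Fin.last n} ∈ Antichains (n + 1) := by
    refine mem_antichains_of_subset hC (Finset.erase_subset _ _) ?_
    rw [Finset.nonempty_iff_ne_empty, Ne, Finset.erase_eq_empty_iff]
    exact fun h => h.elim (Finset.ne_empty_of_mem hlast) hC1
  obtain ⟨A, hA⟩ := exists_image_liftSet_eq fun b hb =>
    notMem_of_singleton_mem_antichains hC hlast (Finset.mem_of_mem_erase hb)
      (Finset.ne_of_mem_erase hb)
  refine ⟨A, mem_antichains_of_image_liftSet (hA ▸ hrest), ?_⟩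
  rw [fmap, hA, Finset.erase_union_of_mem (Finset.mem_singleton_self _),
    Finset.union_eq_left.mpr (Finset.singleton_subset_iff.mpr hlast)]

end Fmap

theorem unique_direct_predecessor_of_singleton_last_general (n : ℕ) :
    (∀ C ∈ Antichains (n + 1),
      achLE C ({({Fin.last n} : Finset (Fin (n + 1)))} : Finset (Finset (Fin (n + 1)))) →
        C = ({({Fin.last n} : Finset (Fin (n + 1)))} : Finset (Finset (Fin (n + 1)))) ∨
          ∃! A : Finset (Finset (Fin n)), A ∈ Antichains n ∧ C = fmap A) ∧
    ¬∃ B ∈ Antichains (n + 1),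
      achLT B ({({Fin.last n} : Finset (Fin (n + 1)))} : Finset (Finset (Fin (n + 1)))) ∧
        ¬achLE B (fmap ({(Finset.univ : Finset (Fin n))} : Finset (Finset (Fin n)))) := by
  constructor
  · intro C hC hle
    refine or_iff_not_imp_left.mpr fun hC1 => ?_
    obtain ⟨A, hA, rfl⟩ :=
      exists_fmap_eq hC (singleton_mem_of_achLE_singleton hC hle) hC1
    exact ⟨A, ⟨hA, rfl⟩, fun A' hA' => fmap_injective hA'.2.symm⟩
  · rintro ⟨B, hB, ⟨hle, hnge⟩, hnle⟩
    obtain ⟨c, hc, hlast_c⟩ : ∃ c ∈ B, Fin.last n ∉ c := by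
      simpa [achLE_singleton_left_iff] using hnge
    refine hnle ?_
    rw [fmap, Finset.image_singleton, achLE_union_right_iff, achLE_singleton_right_iff]
    exact ⟨⟨c, hc, subset_liftSet_univ_iff.mpr hlast_c⟩, hle⟩

theorem unique_direct_predecessor_of_singleton_last (n : ℕ) (hn : 1 ≤ n) :
    (∀ C ∈ Antichains (n + 1),
      achLE C ({({Fin.last n} : Finset (Fin (n + 1)))} : Finset (Finset (Fin (n + 1)))) →
        C = ({({Fin.last n} : Finset (Fin (n + 1)))} : Finset (Finset (Fin (n + 1)))) ∨
          ∃! A : Finset (Finset (Fin n)), A ∈ Antichains n ∧ C = fmap A) ∧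
    ¬∃ B ∈ Antichains (n + 1),
      achLT B ({({Fin.last n} : Finset (Fin (n + 1)))} : Finset (Finset (Fin (n + 1)))) ∧
        ¬achLE B (fmap ({(Finset.univ : Finset (Fin n))} : Finset (Finset (Fin n)))) :=
  unique_direct_predecessor_of_singleton_last_general n
end
end

section
/- Let n ≥ 1 and let I_∂ : 𝒜_{n+1} → ℝ and Ī_∂ : 𝒜_n → ℝ satisfy I_∂(f(𝜶)) = Ī_∂(𝜶) for all 𝜶 ∈ 𝒜_n and I_∂({{n+1}}) = 0. Then for every k ≥ 1, Σ_{𝜸 ∈ U_{n+1}^(k)({n+1})} I_∂(𝜸) = Σ_{𝜶 ∈ S_n^(k)} Ī_∂(𝜶). (Interpreting I_∂ as the partial-information atoms of the (n+1)-source system obtained by appending the whole source vector X as an extra source X^{n+1} = X, this is the identity Un^(k)(X^{n+1};Y|X) = Syn^(k)(X;Y) of the paper's Lemma 3.) -/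
noncomputable section

open scoped BigOperators

attribute [local instance] Classical.propDecidable

/-!
Adjoining the singleton `{n+1}` is a bijection from `S_n⁽ᵏ⁾ ∪ {∅}` onto `U_{n+1}⁽ᵏ⁾({n+1})`:
in an antichain containing `{n+1}` no other member contains `n+1`, so the other members are
subsets of `[n]`, and they inherit the antichain and cardinality conditions. The empty
antichain goes to `{{n+1}}`, whose atom vanishes; the remaining terms agree by hypothesis.
-/

namespace Antichains

variable {n : ℕ}

lemma last_notMem_liftSet (a : Finset (Fin n)) : Fin.last n ∉ liftSet a := by
  simp [liftSet, Fin.castSucc_ne_last]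

lemma liftSet_injective : Function.Injective (liftSet (n := n)) :=
  Finset.map_injective _

lemma liftSet_subset_liftSet {a b : Finset (Fin n)} : liftSet a ⊆ liftSet b ↔ a ⊆ b :=
  Finset.map_subset_map

lemma card_liftSet (a : Finset (Fin n)) : (liftSet a).card = a.card :=
  Finset.card_map _

lemma liftSet_nonempty {a : Finset (Fin n)} : (liftSet a).Nonempty ↔ a.Nonempty :=
  Finset.map_nonempty

lemma singleton_last_not_subset_liftSet (a : Finset (Fin n)) :
    ¬({Fin.last n} : Finset (Fin (n + 1))) ⊆ liftSet a := by
  simpa using last_notMem_liftSet a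

lemma liftSet_ne_singleton_last (a : Finset (Fin n)) : liftSet a ≠ {Fin.last n} :=
  fun h => last_notMem_liftSet a (h ▸ Finset.mem_singleton_self _)

lemma liftSet_subset_singleton_last {a : Finset (Fin n)} :
    liftSet a ⊆ {Fin.last n} ↔ a = ∅ := by
  rw [Finset.subset_singleton_iff, or_iff_left (liftSet_ne_singleton_last a), liftSet,
    Finset.map_eq_empty]

lemma exists_liftSet_eq {c : Finset (Fin (n + 1))} (hc : Fin.last n ∉ c) :
    ∃ a, liftSet a = c := by
  have : c ⊆ Finset.univ.map Fin.castSuccEmb := by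
    rw [← Fin.Iio_last_eq_map]
    intro x hx
    exact Finset.mem_Iio.2 (Fin.lt_last_iff_ne_last.2 (ne_of_mem_of_not_mem hx hc))
  obtain ⟨a, -, rfl⟩ := Finset.subset_map_iff.1 this
  exact ⟨a, rfl⟩

lemma mem_fmap {A : Finset (Finset (Fin n))} {c : Finset (Fin (n + 1))} :
    c ∈ fmap A ↔ c = {Fin.last n} ∨ ∃ a ∈ A, liftSet a = c := by
  simp [fmap]

@[simp]
lemma fmap_empty : fmap (∅ : Finset (Finset (Fin n))) = {{Fin.last n}} := by
  simp [fmap]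

lemma fmap_nonempty (A : Finset (Finset (Fin n))) : (fmap A).Nonempty :=
  ⟨_, mem_fmap.2 (Or.inl rfl)⟩

lemma preimage_liftSet_fmap (A : Finset (Finset (Fin n))) :
    (fmap A).preimage liftSet liftSet_injective.injOn = A := by
  ext a
  simp [mem_fmap, liftSet_ne_singleton_last, liftSet_injective.eq_iff]

lemma fmap_injective : Function.Injective (fmap (n := n)) := fun A B h => by
  simpa only [preimage_liftSet_fmap] using
    congrArg (fun C => C.preimage liftSet liftSet_injective.injOn) h

lemma fmap_mem_antichains_iff {A : Finset (Finset (Fin n))} :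
    fmap A ∈ Antichains (n + 1) ↔
      (∀ a ∈ A, a.Nonempty) ∧ ∀ a ∈ A, ∀ b ∈ A, a ≠ b → ¬a ⊆ b := by
  simp only [Antichains, Set.mem_ofPred_eq, mem_fmap, forall_eq_or_imp, forall_exists_index,
    and_imp, forall_apply_eq_imp_iff₂]
  simp only [fmap_nonempty, Finset.singleton_nonempty, liftSet_nonempty, ne_eq, not_true_eq_false,
    IsEmpty.forall_iff, singleton_last_not_subset_liftSet, not_false_eq_true, implies_true,
    liftSet_ne_singleton_last, liftSet_subset_singleton_last, liftSet_injective.eq_iff,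
    liftSet_subset_liftSet, ← Finset.nonempty_iff_ne_empty, true_and, forall_const, imp_and,
    forall_and, and_self_left]

lemma fmap_mem_Uset_iff {A : Finset (Finset (Fin n))} {k : ℕ} :
    fmap A ∈ Uset (n + 1) k {Fin.last n} ↔ A = ∅ ∨ A ∈ Sset n k := by
  have hcard : (∀ c ∈ fmap A, c ≠ {Fin.last n} → k < c.card) ↔ ∀ a ∈ A, k < a.card := by
    simp only [mem_fmap, forall_eq_or_imp, ne_eq, not_true_eq_false, IsEmpty.forall_iff,
      forall_exists_index, and_imp, forall_apply_eq_imp_iff₂, liftSet_ne_singleton_last,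
      not_false_eq_true, forall_const, card_liftSet, true_and]
  rw [Uset, Sset, Set.mem_ofPred_eq, Set.mem_ofPred_eq, hcard, fmap_mem_antichains_iff,
    Antichains, Set.mem_ofPred_eq]
  rcases A.eq_empty_or_nonempty with rfl | hA
  · simp
  · simp [hA, hA.ne_empty, mem_fmap]

lemma fmap_preimage_liftSet {C : Finset (Finset (Fin (n + 1)))} (hC : C ∈ Antichains (n + 1))
    (hlast : {Fin.last n} ∈ C) :
    fmap (C.preimage liftSet liftSet_injective.injOn) = C := by
  ext c
  rw [mem_fmap]
  constructor
  · rintro (rfl | ⟨a, ha, rfl⟩)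
    exacts [hlast, Finset.mem_preimage.1 ha]
  · intro hc
    by_cases hcl : c = {Fin.last n}
    · exact Or.inl hcl
    have hnot : Fin.last n ∉ c := fun h =>
      hC.2.2 _ hlast c hc (Ne.symm hcl) (Finset.singleton_subset_iff.2 h)
    obtain ⟨a, rfl⟩ := exists_liftSet_eq hnot
    exact Or.inr ⟨a, Finset.mem_preimage.2 hc, rfl⟩

lemma filter_mem_Uset_eq_image_fmap (k : ℕ) :
    Finset.univ.filter (· ∈ Uset (n + 1) k {Fin.last n}) =
      (insert ∅ (Finset.univ.filter (· ∈ Sset n k))).image fmap := by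
  ext C
  simp only [Finset.mem_filter, Finset.mem_univ, true_and, Finset.mem_image, Finset.mem_insert]
  constructor
  · intro hC
    refine ⟨_, ?_, fmap_preimage_liftSet hC.1 hC.2.1⟩
    rw [← fmap_mem_Uset_iff, fmap_preimage_liftSet hC.1 hC.2.1]
    exact hC
  · rintro ⟨A, hA, rfl⟩
    exact fmap_mem_Uset_iff.2 hA

lemma empty_notMem_Sset (n k : ℕ) : ∅ ∉ Sset n k :=
  fun h => Finset.not_nonempty_empty h.1.1

end Antichains

theorem unique_info_of_whole_equals_synergy_general (n : ℕ)
    (Ipart : Finset (Finset (Fin (n + 1))) → ℝ)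
    (Ipartb : Finset (Finset (Fin n)) → ℝ)
    (hagree : ∀ A ∈ Antichains n, Ipart (fmap A) = Ipartb A)
    (hlast : Ipart ({({Fin.last n} : Finset (Fin (n + 1)))} :
      Finset (Finset (Fin (n + 1)))) = 0)
    (k : ℕ) :
    ∑ C ∈ Finset.univ.filter
        (fun C => C ∈ Uset (n + 1) k ({Fin.last n} : Finset (Fin (n + 1)))), Ipart C
      = ∑ A ∈ Finset.univ.filter (fun A => A ∈ Sset n k), Ipartb A := by
  rw [Antichains.filter_mem_Uset_eq_image_fmap, Finset.sum_image Antichains.fmap_injective.injOn,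
    Finset.sum_insert (by simpa using Antichains.empty_notMem_Sset n k), Antichains.fmap_empty,
    hlast, zero_add]
  exact Finset.sum_congr rfl fun A hA => hagree A (Finset.mem_filter.1 hA).2.1

theorem unique_info_of_whole_equals_synergy (n : ℕ) (hn : 1 ≤ n)
    (Ipart : Finset (Finset (Fin (n + 1))) → ℝ)
    (Ipartb : Finset (Finset (Fin n)) → ℝ)
    (hagree : ∀ A ∈ Antichains n, Ipart (fmap A) = Ipartb A)
    (hlast : Ipart ({({Fin.last n} : Finset (Fin (n + 1)))} :
      Finset (Finset (Fin (n + 1)))) = 0)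
    (k : ℕ) (hk : 1 ≤ k) :
    ∑ C ∈ Finset.univ.filter
        (fun C => C ∈ Uset (n + 1) k ({Fin.last n} : Finset (Fin (n + 1)))), Ipart C
      = ∑ A ∈ Finset.univ.filter (fun A => A ∈ Sset n k), Ipartb A :=
  unique_info_of_whole_equals_synergy_general n Ipart Ipartb hagree hlast k
end
end
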